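/- arXiv:math/0011153 — 2 statements merged into one kernel-verified Lean document; each statement's English description precedes it below -/
import Mathlib

section
/- Let G be a group given as a central extension 1 → Z → G → Q → 1 where Z is infinite cyclic and central in G. If Q contains an element of infinite order, then G contains a subgroup isomorphic to ℤ × ℤ. -/
/-!
Lift `q` to `g ∈ G` and let `z` generate `Z`. As `z` is central, `(m, n) ↦ g ^ m * z ^ n` is a
homomorphism `ℤ × ℤ → G`. It is injective: `g ^ m * z ^ n = 1` gives `q ^ m = 1` in `G ⧸ Z`,
so `m = 0`, and then `z ^ n = 1` gives `n = 0`.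
-/

section

variable {G : Type*} [Group G]

theorem Commute.injective_noncommCoprod_zpowersHom {N : Subgroup G} [N.Normal] {g z : G}
    (hgz : Commute g z) (hzN : z ∈ N) (hz : ¬IsOfFinOrder z)
    (hg : ¬IsOfFinOrder (g : G ⧸ N)) :
    Function.Injective ((zpowersHom G g).noncommCoprod (zpowersHom G z)
      fun m n => by simpa only [zpowersHom_apply] using hgz.zpow_zpow m.toAdd n.toAdd) := by
  rw [injective_iff_map_eq_one]
  rintro ⟨m, n⟩ hmn
  rw [MonoidHom.noncommCoprod_apply, zpowersHom_apply, zpowersHom_apply] at hmn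
  have hm : m.toAdd = 0 := by
    have hgm := congrArg (QuotientGroup.mk : G → G ⧸ N) hmn
    rw [QuotientGroup.mk_mul, QuotientGroup.mk_zpow, QuotientGroup.mk_zpow,
      (QuotientGroup.eq_one_iff z).mpr hzN, one_zpow, mul_one, QuotientGroup.mk_one] at hgm
    exact injective_zpow_iff_not_isOfFinOrder.mpr hg (hgm.trans (zpow_zero _).symm)
  have hn : n.toAdd = 0 := by
    rw [hm, zpow_zero, one_mul] at hmn
    exact injective_zpow_iff_not_isOfFinOrder.mpr hz (hmn.trans (zpow_zero _).symm)
  exact Prod.ext (toAdd_eq_zero.mp hm) (toAdd_eq_zero.mp hn)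

theorem Commute.exists_subgroup_mulEquiv_multiplicative_int_prod {N : Subgroup G} [N.Normal]
    {g z : G} (hgz : Commute g z) (hzN : z ∈ N) (hz : ¬IsOfFinOrder z)
    (hg : ¬IsOfFinOrder (g : G ⧸ N)) :
    ∃ H : Subgroup G, Nonempty (H ≃* Multiplicative (ℤ × ℤ)) :=
  ⟨_, ⟨(MonoidHom.ofInjective (hgz.injective_noncommCoprod_zpowersHom hzN hz hg)).symm.trans
    (MulEquiv.prodMultiplicative ℤ ℤ).symm⟩⟩

end

/-- central extension 1 → ℤ → G → Q → 1; if Q has an element of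
infinite order then G contains a subgroup isomorphic to ℤ × ℤ. -/
theorem central_extension_Z_contains_Z2
    (G : Type*) [Group G] (Z : Subgroup G) [Z.Normal]
    (hcentral : Z ≤ Subgroup.center G)
    (hZ : Nonempty (Z ≃* Multiplicative ℤ))
    (q : G ⧸ Z) (hq : ¬ IsOfFinOrder q) :
    ∃ H : Subgroup G, Nonempty (H ≃* Multiplicative (ℤ × ℤ)) := by
  obtain ⟨e⟩ := hZ
  set z : Z := e.symm (.ofAdd 1)
  have hz : ¬IsOfFinOrder (z : G) := by
    rw [← orderOf_eq_zero_iff, Subgroup.orderOf_coe, ← e.orderOf_eq, e.apply_symm_apply,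
      orderOf_ofAdd_eq_addOrderOf, addOrderOf_eq_zero_iff]
    exact not_isOfFinAddOrder_of_isAddTorsionFree one_ne_zero
  obtain ⟨g, rfl⟩ := QuotientGroup.mk_surjective q
  exact Commute.exists_subgroup_mulEquiv_multiplicative_int_prod
    (Subgroup.mem_center_iff.mp (hcentral z.2) g) z.2 hz hq
end

section
/- In the free product G = A * B where A has order at least 2 and B has order at least 3, there exist elements x, y ∈ G generating a free subgroup of rank 2; consequently G has exponential growth when finitely generated. -/
/-- The ball of radius `n` in a group with respect to a finite set `S`:
elements expressible as words of length at most `n` in `S ∪ S⁻¹`. -/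
def wordBall {G : Type*} [Group G] (S : Finset G) (n : ℕ) : Set G :=
  {g : G | ∃ l : List G, l.length ≤ n ∧ (∀ x ∈ l, x ∈ S ∨ x⁻¹ ∈ S) ∧ l.prod = g}

open Pointwise Monoid Monoid.CoprodI Monoid.CoprodI.Word

namespace PPAux

variable {ι : Type*} {M : ι → Type*} [∀ i, Group (M i)]

theorem pp_step {i j : ι} (hij : i ≠ j)
    (p r : M i) (q s : M j) (hp : p ≠ 1) (hq : q ≠ 1) (hr : r ≠ 1) (hs : s ≠ 1)
    (w : Word M) (hw : ¬ ([⟨j, s⁻¹⟩, ⟨i, r⁻¹⟩] <+: w.toList)) :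
    ∃ w' : Word M,
      w'.prod = of p * of q * of r * of s * w.prod ∧
        [⟨i, p⟩, ⟨j, q⟩] <+: w'.toList := by
  obtain ⟨l, h1, h2⟩ := w
  dsimp only at hw ⊢
  rcases l with _ | ⟨⟨k, c⟩, t⟩
  · refine ⟨⟨[⟨i, p⟩, ⟨j, q⟩, ⟨i, r⟩, ⟨j, s⟩], by simp [hp, hq, hr, hs], ?_⟩, ?_, ⟨_, rfl⟩⟩
    · simp [List.isChain_cons_cons, hij, hij.symm]
    · simp [Word.prod, mul_assoc]
  by_cases hk : j = k
  · subst hk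
    by_cases hsc : s * c = 1
    · have hc : c = s⁻¹ := (inv_eq_of_mul_eq_one_right hsc).symm
      subst hc
      rcases t with _ | ⟨⟨k', d⟩, t'⟩
      · refine ⟨⟨[⟨i, p⟩, ⟨j, q⟩, ⟨i, r⟩], by simp [hp, hq, hr], ?_⟩, ?_, ⟨_, rfl⟩⟩
        · simp [List.isChain_cons_cons, hij, hij.symm]
        · simp [Word.prod, mul_assoc]
      have hjk' : (j : ι) ≠ k' := (List.isChain_cons_cons.mp h2).1
      by_cases hk' : i = k'
      · subst hk'
        by_cases hrd : r * d = 1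
        · exfalso
          apply hw
          have hd : d = r⁻¹ := (inv_eq_of_mul_eq_one_right hrd).symm
          subst hd
          exact ⟨t', rfl⟩
        · refine ⟨⟨⟨i, p⟩ :: ⟨j, q⟩ :: ⟨i, r * d⟩ :: t', ?_, ?_⟩, ?_, ⟨_, rfl⟩⟩
          · simp only [List.forall_mem_cons]
            exact ⟨hp, hq, hrd, fun x hx => h1 x (by simp [hx])⟩
          · refine List.isChain_cons_cons.mpr ⟨hij, List.isChain_cons_cons.mpr ⟨hij.symm, ?_⟩⟩
            exact List.isChain_cons.mpr
              ⟨(List.isChain_cons.mp (List.isChain_cons_cons.mp h2).2).1,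
               ((List.isChain_cons_cons.mp h2).2).tail⟩
          · simp [Word.prod, mul_assoc]
      · refine ⟨⟨⟨i, p⟩ :: ⟨j, q⟩ :: ⟨i, r⟩ :: ⟨k', d⟩ :: t', ?_, ?_⟩, ?_, ⟨_, rfl⟩⟩
        · simp only [List.forall_mem_cons]
          exact ⟨hp, hq, hr, h1 ⟨_, _⟩ (by simp), fun x hx => h1 x (by simp [hx])⟩
        · exact List.isChain_cons_cons.mpr ⟨hij, List.isChain_cons_cons.mpr ⟨hij.symm,
            List.isChain_cons_cons.mpr ⟨hk', h2.tail⟩⟩⟩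
        · simp [Word.prod, mul_assoc]
    · refine ⟨⟨⟨i, p⟩ :: ⟨j, q⟩ :: ⟨i, r⟩ :: ⟨j, s * c⟩ :: t, ?_, ?_⟩, ?_, ⟨_, rfl⟩⟩
      · simp only [List.forall_mem_cons]
        exact ⟨hp, hq, hr, hsc, fun x hx => h1 x (by simp [hx])⟩
      · exact List.isChain_cons_cons.mpr ⟨hij, List.isChain_cons_cons.mpr ⟨hij.symm,
          List.isChain_cons_cons.mpr ⟨hij, List.isChain_cons.mpr
            ⟨(List.isChain_cons.mp h2).1, h2.tail⟩⟩⟩⟩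
      · simp [Word.prod, mul_assoc]
  · refine ⟨⟨⟨i, p⟩ :: ⟨j, q⟩ :: ⟨i, r⟩ :: ⟨j, s⟩ :: ⟨k, c⟩ :: t, ?_, ?_⟩, ?_, ⟨_, rfl⟩⟩
    · simp only [List.forall_mem_cons]
      exact ⟨hp, hq, hr, hs, h1 ⟨_, _⟩ (by simp), fun x hx => h1 x (by simp [hx])⟩
    · exact List.isChain_cons_cons.mpr ⟨hij, List.isChain_cons_cons.mpr ⟨hij.symm,
        List.isChain_cons_cons.mpr ⟨hij, List.isChain_cons_cons.mpr ⟨hk, h2⟩⟩⟩⟩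
    · simp [Word.prod, mul_assoc]

theorem smul_eq_of_prod [DecidableEq ι] [∀ i, DecidableEq (M i)]
    {g : CoprodI M} {w w' : Word M} (h : w'.prod = g * w.prod) : g • w = w' := by
  have hinj : Function.Injective (Word.prod : Word M → CoprodI M) :=
    (Word.equiv (M := M)).symm.injective
  apply hinj
  rw [Word.prod_smul, h]

theorem two_letter_word {i j : ι} (hij : i ≠ j) (m : M i) (n : M j)
    (hm : m ≠ 1) (hn : n ≠ 1) : ∃ w : Word M, w.toList = [⟨i, m⟩, ⟨j, n⟩] :=
  ⟨⟨[⟨i, m⟩, ⟨j, n⟩], by simp [hm, hn], by simp [List.isChain_cons_cons, hij]⟩, rfl⟩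

theorem disj_prefix {x y x' y' : Σ i, M i} (h : ¬(x = x' ∧ y = y')) :
    Disjoint {w : Word M | [x, y] <+: w.toList} {w : Word M | [x', y'] <+: w.toList} := by
  rw [Set.disjoint_left]
  rintro w ⟨t, ht⟩ ⟨t', ht'⟩
  have := ht.trans ht'.symm
  simp only [List.cons_append, List.nil_append, List.cons.injEq] at this
  exact h ⟨this.1, this.2.1⟩

theorem prefix_smul [DecidableEq ι] [∀ i, DecidableEq (M i)]
    {i j : ι} (hij : i ≠ j)
    (p r : M i) (q s : M j) (hp : p ≠ 1) (hq : q ≠ 1) (hr : r ≠ 1) (hs : s ≠ 1)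
    (w : Word M) (hw : ¬([⟨j, s⁻¹⟩, ⟨i, r⁻¹⟩] <+: w.toList)) :
    [⟨i, p⟩, ⟨j, q⟩] <+: ((of p * of q * of r * of s : CoprodI M) • w).toList := by
  obtain ⟨w', hprod, hpre⟩ := pp_step hij p r q s hp hq hr hs w hw
  rw [smul_eq_of_prod hprod]
  exact hpre

set_option maxHeartbeats 1000000 in
universe u v

theorem uv_free_aux {ι : Type u} {M : ι → Type v} [∀ i, Group (M i)]
    {i j : ι} (hij : i ≠ j) (a : M i) (b₁ b₂ : M j)
    (ha : a ≠ 1) (hb₁ : b₁ ≠ 1) (hb₂ : b₂ ≠ 1) (hne : b₁ ≠ b₂)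
    {κ : Type (max u v)} [Nontrivial κ] (e : κ ≃ Fin 2) :
    Function.Injective
      (FreeGroup.lift
        (![of a * of b₁ * of a * of b₂, of a * of b₂ * of a * of b₁] ∘ e) :
        FreeGroup κ →* CoprodI M) := by
  classical
  have hb₁₂ : b₁⁻¹ ≠ b₂⁻¹ := fun h => hne (inv_injective h)
  have hinva : (a⁻¹)⁻¹ = a := inv_inv a
  set X : Fin 2 → Set (Word M) :=
    ![{w : Word M | [⟨i, a⟩, ⟨j, b₁⟩] <+: w.toList},
      {w : Word M | [⟨i, a⟩, ⟨j, b₂⟩] <+: w.toList}] with hX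
  set Y : Fin 2 → Set (Word M) :=
    ![{w : Word M | [⟨j, b₂⁻¹⟩, ⟨i, a⁻¹⟩] <+: w.toList},
      {w : Word M | [⟨j, b₁⁻¹⟩, ⟨i, a⁻¹⟩] <+: w.toList}] with hY
  have h1 : ∀ k, (X k).Nonempty := by
    intro k
    fin_cases k
    · obtain ⟨w, hw⟩ := two_letter_word hij a b₁ ha hb₁
      exact ⟨w, by rw [hX]; simp only [Matrix.cons_val_zero]; exact ⟨[], by simp [hw]⟩⟩
    · obtain ⟨w, hw⟩ := two_letter_word hij a b₂ ha hb₂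
      exact ⟨w, by rw [hX]; simp only [Matrix.cons_val_one, Matrix.head_cons]
                   exact ⟨[], by simp [hw]⟩⟩
  have h2 : Pairwise (Function.onFun Disjoint X) := by
    intro k l hkl
    fin_cases k <;> fin_cases l <;>
      first
        | exact absurd rfl hkl
        | · apply disj_prefix
            rintro ⟨-, h⟩
            injection h with h1 h2
            exact hne h2
        | · apply disj_prefix
            rintro ⟨-, h⟩
            injection h with h1 h2
            exact hne h2.symm
  have h3 : Pairwise (Function.onFun Disjoint Y) := by
    intro k l hkl
    fin_cases k <;> fin_cases l <;>
      first
        | exact absurd rfl hkl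
        | · apply disj_prefix
            rintro ⟨h, -⟩
            injection h with h1 h2
            exact hb₁₂ h2.symm
        | · apply disj_prefix
            rintro ⟨h, -⟩
            injection h with h1 h2
            exact hb₁₂ h2
  have h4 : ∀ k l, Disjoint (X k) (Y l) := by
    intro k l
    fin_cases k <;> fin_cases l <;>
      · apply disj_prefix
        rintro ⟨h, -⟩
        injection h with h1 h2
        exact hij h1
  have huinv : (of a * of b₁ * of a * of b₂ : CoprodI M)⁻¹ =
      of b₂⁻¹ * of a⁻¹ * of b₁⁻¹ * of a⁻¹ := by
    simp [mul_inv_rev, mul_assoc]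
  have hvinv : (of a * of b₂ * of a * of b₁ : CoprodI M)⁻¹ =
      of b₁⁻¹ * of a⁻¹ * of b₂⁻¹ * of a⁻¹ := by
    simp [mul_inv_rev, mul_assoc]
  have h5 : ∀ k, (![of a * of b₁ * of a * of b₂, of a * of b₂ * of a * of b₁]) k
      • (Y k)ᶜ ⊆ X k := by
    intro k
    fin_cases k <;>
    · intro z hz
      rw [Set.mem_smul_set] at hz
      obtain ⟨w, hw, rfl⟩ := hz
      first
      | exact prefix_smul hij a a b₁ b₂ ha hb₁ ha hb₂ w hw
      | exact prefix_smul hij a a b₂ b₁ ha hb₂ ha hb₁ w hw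
  have h6 : ∀ k, (![of a * of b₁ * of a * of b₂, of a * of b₂ * of a * of b₁])⁻¹ k
      • (X k)ᶜ ⊆ Y k := by
    intro k
    fin_cases k
    · intro z hz
      rw [Set.mem_smul_set] at hz
      obtain ⟨w, hw, rfl⟩ := hz
      have hw' : ¬([⟨i, (a⁻¹)⁻¹⟩, ⟨j, (b₁⁻¹)⁻¹⟩] <+: w.toList) := by
        rw [hinva, inv_inv]; exact hw
      have := prefix_smul hij.symm b₂⁻¹ b₁⁻¹ a⁻¹ a⁻¹ (inv_ne_one.2 hb₂) (inv_ne_one.2 ha)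
          (inv_ne_one.2 hb₁) (inv_ne_one.2 ha) w hw'
      show _ ∈ Y 0
      rw [hY]
      simp only [Matrix.cons_val_zero]
      show [(⟨j, b₂⁻¹⟩ : Σ i, M i), ⟨i, a⁻¹⟩] <+: _
      convert this using 3
      exact huinv
    · intro z hz
      rw [Set.mem_smul_set] at hz
      obtain ⟨w, hw, rfl⟩ := hz
      have hw' : ¬([⟨i, (a⁻¹)⁻¹⟩, ⟨j, (b₂⁻¹)⁻¹⟩] <+: w.toList) := by
        rw [hinva, inv_inv]; exact hw
      have := prefix_smul hij.symm b₁⁻¹ b₂⁻¹ a⁻¹ a⁻¹ (inv_ne_one.2 hb₁) (inv_ne_one.2 ha)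
          (inv_ne_one.2 hb₂) (inv_ne_one.2 ha) w hw'
      show _ ∈ Y 1
      rw [hY]
      simp only [Matrix.cons_val_one, Matrix.head_cons]
      show [(⟨j, b₁⁻¹⟩ : Σ i, M i), ⟨i, a⁻¹⟩] <+: _
      convert this using 3
      exact hvinv
  refine FreeGroup.injective_lift_of_ping_pong (ι := κ) (G := CoprodI M) (α := Word M)
    (a := ![of a * of b₁ * of a * of b₂, of a * of b₂ * of a * of b₁] ∘ e)
    (X := X ∘ e) (Y := Y ∘ e) ?_ ?_ ?_ ?_ ?_ ?_
  · exact fun k => h1 (e k)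
  · exact fun k l hkl => h2 fun h => hkl (e.injective h)
  · exact fun k l hkl => h3 fun h => hkl (e.injective h)
  · exact fun k l => h4 (e k) (e l)
  · exact fun k => h5 (e k)
  · exact fun k => h6 (e k)

section Transfer
universe u' v'
variable {A : Type u'} {B : Type v'} [Group A] [Group B]

abbrev MF (A : Type u') (B : Type v') : Bool → Type (max u' v') :=
  fun b => cond b (ULift.{v'} A) (ULift.{u'} B)

instance MF.group : ∀ i : Bool, Group (MF A B i)
  | true => inferInstanceAs (Group (ULift A))
  | false => inferInstanceAs (Group (ULift B))

def toCop : CoprodI (MF A B) →* Coprod A B :=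
  CoprodI.lift fun i => match i with
    | true => Coprod.inl.comp (MulEquiv.ulift).toMonoidHom
    | false => Coprod.inr.comp (MulEquiv.ulift).toMonoidHom

def fromCop : Coprod A B →* CoprodI (MF A B) :=
  Coprod.lift
    ((CoprodI.of (M := MF A B) (i := true)).comp (MulEquiv.ulift.symm.toMonoidHom))
    ((CoprodI.of (M := MF A B) (i := false)).comp (MulEquiv.ulift.symm.toMonoidHom))

theorem fromCop_toCop (z : CoprodI (MF A B)) : fromCop (toCop z) = z := by
  have h : (fromCop (A := A) (B := B)).comp toCop = MonoidHom.id _ := by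
    apply CoprodI.ext_hom
    intro i
    cases i
    · ext x
      simp only [MonoidHom.comp_apply, MonoidHom.id_apply]
      rw [toCop, CoprodI.lift_of]
      show fromCop (Coprod.inr x.down) = of x
      rw [fromCop, Coprod.lift_apply_inr]
      rfl
    · ext x
      simp only [MonoidHom.comp_apply, MonoidHom.id_apply]
      rw [toCop, CoprodI.lift_of]
      show fromCop (Coprod.inl x.down) = of x
      rw [fromCop, Coprod.lift_apply_inl]
      rfl
  exact DFunLike.congr_fun h z

theorem toCop_injective : Function.Injective (toCop (A := A) (B := B)) :=
  Function.LeftInverse.injective fromCop_toCop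

theorem exists_free_pair (hA : ∃ a : A, a ≠ 1)
    (hB : ∃ b₁ b₂ : B, b₁ ≠ b₂ ∧ b₁ ≠ 1 ∧ b₂ ≠ 1) :
    ∃ x y : Coprod A B,
      Function.Injective (FreeGroup.lift ![x, y] : FreeGroup (Fin 2) →* Coprod A B) := by
  obtain ⟨a, ha⟩ := hA
  obtain ⟨b₁, b₂, hne, hb₁, hb₂⟩ := hB
  have hij : (true : Bool) ≠ false := by decide
  let oA : A → CoprodI (MF A B) := fun z => of (M := MF A B) (i := true) (ULift.up z)
  let oB : B → CoprodI (MF A B) := fun z => of (M := MF A B) (i := false) (ULift.up z)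
  set u : CoprodI (MF A B) := oA a * oB b₁ * oA a * oB b₂ with hu
  set v : CoprodI (MF A B) := oA a * oB b₂ * oA a * oB b₁ with hv
  have hinj0 :
      Function.Injective
        (FreeGroup.lift (![u, v] ∘ (Equiv.ulift : ULift.{max u' v'} (Fin 2) ≃ Fin 2)) :
          FreeGroup (ULift.{max u' v'} (Fin 2)) →* CoprodI (MF A B)) :=
    uv_free_aux (M := MF A B) (i := true) (j := false) hij
      (ULift.up a) (ULift.up b₁) (ULift.up b₂)
      (fun h => ha (congrArg ULift.down h))
      (fun h => hb₁ (congrArg ULift.down h))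
      (fun h => hb₂ (congrArg ULift.down h))
      (fun h => hne (congrArg ULift.down h))
      Equiv.ulift
  refine ⟨toCop u, toCop v, ?_⟩
  have hcomp : (FreeGroup.lift ![toCop u, toCop v] : FreeGroup (Fin 2) →* Coprod A B) =
      (toCop.comp (FreeGroup.lift (![u, v] ∘ (Equiv.ulift : ULift (Fin 2) ≃ Fin 2)))).comp
        (FreeGroup.freeGroupCongr Equiv.ulift.symm).toMonoidHom := by
    apply FreeGroup.ext_hom
    intro k
    fin_cases k <;> simp
  rw [hcomp]
  simp only [MonoidHom.coe_comp, MulEquiv.coe_toMonoidHom]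
  exact (toCop_injective.comp hinj0).comp (MulEquiv.injective _)

end Transfer

end PPAux


namespace PPAux2

variable {G : Type*} [Group G]

theorem wordBall_mono {S : Finset G} {m n : ℕ} (h : m ≤ n) :
    wordBall S m ⊆ wordBall S n := by
  rintro g ⟨l, hl, hm, hp⟩
  exact ⟨l, hl.trans h, hm, hp⟩

theorem one_mem_wordBall (S : Finset G) (n : ℕ) : (1 : G) ∈ wordBall S n :=
  ⟨[], by simp, by simp, by simp⟩

theorem mul_mem_wordBall {S : Finset G} {g h : G} {m n : ℕ}
    (hg : g ∈ wordBall S m) (hh : h ∈ wordBall S n) : g * h ∈ wordBall S (m + n) := by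
  obtain ⟨l1, hl1, hm1, rfl⟩ := hg
  obtain ⟨l2, hl2, hm2, rfl⟩ := hh
  refine ⟨l1 ++ l2, ?_, ?_, by simp⟩
  · rw [List.length_append]; omega
  · intro z hz
    rcases List.mem_append.mp hz with h | h
    exacts [hm1 z h, hm2 z h]

theorem inv_mem_wordBall {S : Finset G} {g : G} {n : ℕ}
    (hg : g ∈ wordBall S n) : g⁻¹ ∈ wordBall S n := by
  obtain ⟨l, hl, hm, rfl⟩ := hg
  refine ⟨(l.map (fun z => z⁻¹)).reverse, by simp [hl], ?_, (List.prod_inv_reverse l).symm⟩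
  intro z hz
  simp only [List.mem_reverse, List.mem_map] at hz
  obtain ⟨y, hy, rfl⟩ := hz
  rcases hm y hy with h | h
  · exact Or.inr (by simpa using h)
  · exact Or.inl h

theorem exists_radius {S : Finset G} (hS : Subgroup.closure (S : Set G) = ⊤) (g : G) :
    ∃ n, g ∈ wordBall S n := by
  have hg : g ∈ Subgroup.closure (S : Set G) := by rw [hS]; trivial
  induction hg using Subgroup.closure_induction with
  | mem z hz =>
    refine ⟨1, [z], by simp, ?_, by simp⟩
    intro w hw
    rw [List.mem_singleton] at hw
    subst hw
    exact Or.inl hz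
  | one => exact ⟨0, one_mem_wordBall S 0⟩
  | mul z w _ _ ihz ihw =>
    obtain ⟨m, hm⟩ := ihz
    obtain ⟨n, hn⟩ := ihw
    exact ⟨m + n, mul_mem_wordBall hm hn⟩
  | inv z _ ih =>
    obtain ⟨n, hn⟩ := ih
    exact ⟨n, inv_mem_wordBall hn⟩

theorem wordBall_finite (S : Finset G) : ∀ n : ℕ, (wordBall S n).Finite
  | 0 => by
    refine Set.Finite.subset (Set.finite_singleton 1) ?_
    rintro g ⟨l, hl, -, rfl⟩
    rw [Nat.le_zero, List.length_eq_zero_iff] at hl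
    simp [hl]
  | (n + 1) => by
    have ih := wordBall_finite S n
    refine Set.Finite.subset (Set.Finite.union
      (Set.Finite.biUnion ((S.finite_toSet.union (S.finite_toSet.image (fun z => z⁻¹))))
        (fun t _ => ih.image (fun w => t * w))) ih) ?_
    rintro g ⟨l, hl, hm, rfl⟩
    rcases l with _ | ⟨z, l'⟩
    · exact Set.mem_union_right _ (one_mem_wordBall S n)
    · refine Set.mem_union_left _ ?_
      have hz : z ∈ (S : Set G) ∪ (fun z : G => z⁻¹) '' (S : Set G) := by
        rcases hm z (List.mem_cons_self) with h | h
        · exact Set.mem_union_left _ h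
        · exact Set.mem_union_right _ ⟨z⁻¹, h, inv_inv z⟩
      exact Set.mem_biUnion hz
        ⟨l'.prod, ⟨l', by simpa using hl, fun w hw => hm w (List.mem_cons_of_mem _ hw), rfl⟩,
          (List.prod_cons).symm⟩

theorem list_prod_mem_wordBall {S : Finset G} {L : ℕ} :
    ∀ l : List G, (∀ z ∈ l, z ∈ wordBall S L) → l.prod ∈ wordBall S (l.length * L)
  | [], _ => by simpa using one_mem_wordBall S 0
  | (z :: l), h => by
    rw [List.prod_cons, List.length_cons, Nat.succ_mul, Nat.add_comm]
    exact mul_mem_wordBall (h z (List.mem_cons_self))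
      (list_prod_mem_wordBall l fun w hw => h w (List.mem_cons_of_mem _ hw))

theorem reduce_pos {α : Type*} [DecidableEq α] :
    ∀ L : List (α × Bool), (∀ p ∈ L, p.2 = true) → FreeGroup.reduce L = L
  | [], _ => rfl
  | (x :: L), h => by
    rw [FreeGroup.reduce.cons, reduce_pos L (fun p hp => h p (List.mem_cons_of_mem _ hp))]
    rcases L with _ | ⟨y, t⟩
    · rfl
    · have hx : x.2 = true := h x (List.mem_cons_self)
      have hy : y.2 = true := h y (by simp)
      simp [hx, hy]

theorem prod_map_of_toWord {α : Type*} [DecidableEq α] (l : List α) :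
    ((l.map FreeGroup.of).prod).toWord = l.map (fun a => (a, true)) := by
  have h1 : ∀ l : List α, (l.map FreeGroup.of).prod = FreeGroup.mk (l.map (fun a => (a, true))) := by
    intro l
    induction l with
    | nil => simp [← FreeGroup.one_eq_mk]
    | cons a l ih =>
      rw [List.map_cons, List.prod_cons, ih, List.map_cons]
      rw [show FreeGroup.of a = FreeGroup.mk [(a, true)] from rfl, FreeGroup.mul_mk]
      rfl
  rw [h1, FreeGroup.toWord_mk, reduce_pos]
  intro p hp
  simp only [List.mem_map] at hp
  obtain ⟨a, -, rfl⟩ := hp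
  rfl

theorem pos_list_injective {α : Type*} [DecidableEq α] :
    Function.Injective (fun l : List α => (l.map FreeGroup.of).prod) := by
  intro l1 l2 h
  have h2 := congrArg FreeGroup.toWord h
  rw [prod_map_of_toWord, prod_map_of_toWord] at h2
  exact List.map_injective_iff.mpr (fun a b hab => congrArg Prod.fst hab) h2

end PPAux2

namespace PPAux2

variable {G : Type*} [Group G]

theorem growth {x y : G}
    (hφ : Function.Injective (FreeGroup.lift ![x, y] : FreeGroup (Fin 2) →* G))
    (S : Finset G) (hS : Subgroup.closure (S : Set G) = ⊤) :
    ∃ c : ℝ, 1 < c ∧ ∀ n : ℕ, c ^ n ≤ (wordBall S n).ncard := by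
  classical
  have hx1 : x ≠ 1 := by
    intro h
    have h0 : (FreeGroup.lift ![x, y]) (FreeGroup.of (0 : Fin 2)) = x := by simp
    have : FreeGroup.of (0 : Fin 2) = 1 := hφ (by rw [map_one, h0, h])
    exact FreeGroup.of_ne_one _ this
  have key : ∀ k L : ℕ, x ∈ wordBall S L → y ∈ wordBall S L →
      (2 : ℕ) ^ k ≤ (wordBall S (k * L)).ncard := by
    intro k L hxL hyL
    set F : (Fin k → Bool) → G := fun ε => (List.ofFn fun t => if ε t then x else y).prod with hF
    have hrep : ∀ ε : Fin k → Bool, F ε =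
        (FreeGroup.lift ![x, y])
          (((List.ofFn fun t => (if ε t then (0 : Fin 2) else 1)).map FreeGroup.of).prod) := by
      intro ε
      rw [map_list_prod, List.map_map, List.map_ofFn, hF]
      dsimp only
      refine congrArg List.prod (congrArg List.ofFn ?_)
      funext t
      by_cases h : ε t <;> simp [h]
    have hFinj : Function.Injective F := by
      intro ε δ h
      rw [hrep ε, hrep δ] at h
      have h2 := pos_list_injective (hφ h)
      have h3 := List.ofFn_inj.mp h2
      funext t
      have h4 := congrFun h3 t
      by_cases h5 : ε t <;> by_cases h6 : δ t <;> simp_all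
    have hsub : Set.range F ⊆ wordBall S (k * L) := by
      rintro _ ⟨ε, rfl⟩
      have hmem : ∀ z ∈ (List.ofFn fun t => if ε t then x else y), z ∈ wordBall S L := by
        intro z hz
        rw [List.mem_ofFn] at hz
        obtain ⟨t, rfl⟩ := hz
        by_cases h : ε t <;> simp [h, hxL, hyL]
      have := list_prod_mem_wordBall (S := S) (L := L) _ hmem
      simpa using this
    calc (2 : ℕ) ^ k = (Set.range F).ncard := by
          rw [← Set.image_univ, Set.ncard_image_of_injective _ hFinj, Set.ncard_univ]
          simp
      _ ≤ _ := Set.ncard_le_ncard hsub (wordBall_finite S _)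
  obtain ⟨m1, hm1⟩ := exists_radius hS x
  obtain ⟨m2, hm2⟩ := exists_radius hS y
  set L : ℕ := max m1 m2 + 1 with hLdef
  have hL1 : 1 ≤ L := by omega
  have hxL : x ∈ wordBall S L := wordBall_mono (by omega) hm1
  have hyL : y ∈ wordBall S L := wordBall_mono (by omega) hm2
  have hsex : ∃ s ∈ S, s ≠ (1 : G) := by
    by_contra hcon
    push_neg at hcon
    have hsub : (S : Set G) ⊆ ((⊥ : Subgroup G) : Set G) := by
      intro s hs
      have := hcon s hs
      simp [this]
    have hle := (Subgroup.closure_le ⊥).mpr hsub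
    rw [hS] at hle
    exact hx1 (by simpa [Subgroup.mem_bot] using hle (Subgroup.mem_top x))
  obtain ⟨s, hsS, hs1⟩ := hsex
  have h2card : ∀ n : ℕ, 1 ≤ n → 2 ≤ (wordBall S n).ncard := by
    intro n hn
    have hsmem : s ∈ wordBall S n := by
      refine wordBall_mono hn ⟨[s], by simp, ?_, by simp⟩
      intro w hw
      rw [List.mem_singleton] at hw
      subst hw
      exact Or.inl hsS
    have hsub : ({(1 : G), s} : Set G) ⊆ wordBall S n := by
      rintro z hz
      rcases hz with rfl | hz
      · exact one_mem_wordBall S n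
      · rw [Set.mem_singleton_iff] at hz
        subst hz
        exact hsmem
    calc 2 = ({(1 : G), s} : Set G).ncard := (Set.ncard_pair (Ne.symm hs1)).symm
      _ ≤ _ := Set.ncard_le_ncard hsub (wordBall_finite S n)
  have h1card : ∀ n : ℕ, 1 ≤ (wordBall S n).ncard := by
    intro n
    have h := Set.ncard_le_ncard (show ({(1:G)} : Set G) ⊆ wordBall S n by
      simp [one_mem_wordBall]) (wordBall_finite S n)
    simpa using h
  have hLpos : (0:ℝ) < 2 * (L:ℝ) := by positivity
  refine ⟨(2 : ℝ) ^ ((1 : ℝ) / (2 * (L : ℝ))), ?_, ?_⟩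
  · rw [Real.one_lt_rpow_iff_of_pos (by norm_num)]
    exact Or.inl ⟨by norm_num, by positivity⟩
  · intro n
    have hc : ((2 : ℝ) ^ ((1 : ℝ) / (2 * (L : ℝ)))) ^ n = (2 : ℝ) ^ ((n : ℝ) / (2 * (L : ℝ))) := by
      rw [← Real.rpow_natCast ((2 : ℝ) ^ ((1 : ℝ) / (2 * (L : ℝ)))) n,
        ← Real.rpow_mul (by norm_num)]
      ring_nf
    rw [hc]
    rcases Nat.lt_or_ge n L with hn | hn
    · rcases Nat.eq_zero_or_pos n with rfl | hn1
      · simpa using (Nat.one_le_cast.mpr (h1card 0) : (1:ℝ) ≤ _)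
      · have hle : ((n : ℝ)) / (2 * (L : ℝ)) ≤ 1 := by
          rw [div_le_one hLpos]
          have h1 : (n : ℝ) ≤ (L : ℝ) := Nat.cast_le.mpr hn.le
          have h2 : (0:ℝ) ≤ (L:ℝ) := Nat.cast_nonneg L
          linarith
        calc (2 : ℝ) ^ ((n : ℝ) / (2 * (L : ℝ))) ≤ 2 ^ (1 : ℝ) :=
              Real.rpow_le_rpow_of_exponent_le one_le_two hle
          _ = 2 := Real.rpow_one 2
          _ ≤ ((wordBall S n).ncard : ℝ) := by exact_mod_cast h2card n hn1
    · set k : ℕ := n / L with hk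
      have hk1 : 1 ≤ k := (Nat.one_le_div_iff (by omega)).mpr hn
      have hkL : k * L ≤ n := Nat.div_mul_le_self n L
      have hcount : (2 : ℕ) ^ k ≤ (wordBall S n).ncard :=
        le_trans (key k L hxL hyL)
          (Set.ncard_le_ncard (wordBall_mono hkL) (wordBall_finite S n))
      have hexp : ((n : ℝ)) / (2 * (L : ℝ)) ≤ (k : ℝ) := by
        rw [div_le_iff₀ hLpos]
        have hmod : n % L < L := Nat.mod_lt _ (by omega)
        have hdm : L * k + n % L = n := Nat.div_add_mod n L
        have c1 : (1:ℝ) ≤ (k:ℝ) := Nat.one_le_cast.mpr hk1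
        have c2 : ((n % L : ℕ) : ℝ) < (L:ℝ) := Nat.cast_lt.mpr hmod
        have c3 : (L:ℝ) * (k:ℝ) + ((n % L : ℕ) : ℝ) = (n:ℝ) := by exact_mod_cast hdm
        nlinarith [Nat.cast_nonneg (α := ℝ) L]
      calc (2 : ℝ) ^ ((n : ℝ) / (2 * (L : ℝ))) ≤ (2 : ℝ) ^ ((k : ℝ)) :=
            Real.rpow_le_rpow_of_exponent_le one_le_two hexp
        _ = ((2 ^ k : ℕ) : ℝ) := by rw [Real.rpow_natCast]; push_cast; ring
        _ ≤ _ := Nat.cast_le.mpr hcount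

end PPAux2


/-- if |A| ≥ 2 and |B| ≥ 3 then A * B contains two elements
generating a free subgroup of rank 2; consequently it has exponential growth
with respect to any finite generating set. -/
theorem coprod_ping_pong_free_subgroup
    (A B : Type*) [Group A] [Group B]
    (hA : ∃ a : A, a ≠ 1)
    (hB : ∃ b₁ b₂ : B, b₁ ≠ b₂ ∧ b₁ ≠ 1 ∧ b₂ ≠ 1) :
    (∃ x y : Monoid.Coprod A B,
        Nonempty ((Subgroup.closure {x, y} : Subgroup (Monoid.Coprod A B)) ≃* FreeGroup (Fin 2))) ∧
      ∀ S : Finset (Monoid.Coprod A B), Subgroup.closure (S : Set (Monoid.Coprod A B)) = ⊤ →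
        ∃ c : ℝ, 1 < c ∧ ∀ n : ℕ, c ^ n ≤ (wordBall S n).ncard := by
  obtain ⟨x, y, hφ⟩ := PPAux.exists_free_pair hA hB
  constructor
  · refine ⟨x, y, ?_⟩
    have hrange : (FreeGroup.lift ![x, y]).range = Subgroup.closure {x, y} := by
      rw [FreeGroup.range_lift_eq_closure]
      congr 1
      ext z
      constructor
      · rintro ⟨i, rfl⟩
        fin_cases i
        · exact Set.mem_insert _ _
        · exact Set.mem_insert_of_mem _ rfl
      · rintro (rfl | hz)
        · exact ⟨0, rfl⟩
        · rw [Set.mem_singleton_iff] at hz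
          subst hz
          exact ⟨1, rfl⟩
    exact ⟨(MulEquiv.subgroupCongr hrange).symm.trans (MonoidHom.ofInjective hφ).symm⟩
  · intro S hSclosure
    exact PPAux2.growth hφ S hSclosure
end
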